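/- Define c*(μ) = ∫₀^∞ ln(z) G_α(z/μ) g_α(z) dz + ∫₀^∞ ln(z) G_α(μz) g_α(z) dz for μ ≥ 1, where g_α and G_α are the pdf and cdf of Gamma(α,1). Then d/dμ c*(μ) = −(Γ(2α) μ^{α−1} ln μ) / (Γ(α)² (1+μ)^{2α}) ≤ 0 for all μ ≥ 1; in particular c*(μ) is nonincreasing on [1,∞). -/

import Mathlib

open MeasureTheory ProbabilityTheory

/-- CDF of the Gamma(α,1) distribution. -/
noncomputable def gammaCDF (α x : ℝ) : ℝ := ∫ t in Set.Iic x, gammaPDFReal α 1 t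

/-- c*(μ) = ∫₀^∞ ln(z) G_α(z/μ) g_α(z) dz + ∫₀^∞ ln(z) G_α(μz) g_α(z) dz. -/
noncomputable def cstarW (α μ : ℝ) : ℝ :=
  (∫ z in Set.Ioi (0:ℝ), Real.log z * gammaCDF α (z / μ) * gammaPDFReal α 1 z) +
    ∫ z in Set.Ioi (0:ℝ), Real.log z * gammaCDF α (μ * z) * gammaPDFReal α 1 z

/-!
Since `z / μ = μ⁻¹ * z`, we have `c*(μ) = B(μ⁻¹) + B(μ)` with
`B(c) = ∫₀^∞ log z · G_α(c z) g_α(z) dz`. Differentiating under the integral sign,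
`B'(c) = ∫₀^∞ log z · z g_α(c z) g_α(z) dz`, and the substitution `z ↦ z / (1 + c)` turns this into
`c^(α-1) (1 + c)^(-2α) (L - Γ(2α) log(1 + c)) / Γ(α)²` with `L = ∫₀^∞ log z · z^(2α-1) e^(-z) dz`.
In `c*'(μ) = -μ⁻² B'(μ⁻¹) + B'(μ)` the unknown constant `L` cancels and only
`-Γ(2α) μ^(α-1) log μ / (Γ(α)² (1 + μ)^(2α))` survives; it is `≤ 0` for `μ ≥ 1`, so `c*` is
antitone there.
-/

open Real Set Filter

lemma abs_log_le_rpow_add_rpow_neg_div {z δ : ℝ} (hz : 0 < z) (hδ : 0 < δ) :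
    |log z| ≤ (z ^ δ + z ^ (-δ)) / δ := by
  have hpos : 0 ≤ z ^ δ / δ ∧ 0 ≤ z ^ (-δ) / δ := ⟨by positivity, by positivity⟩
  rw [add_div, abs_le]
  constructor
  · have h := log_le_rpow_div (inv_nonneg.mpr hz.le) hδ
    rw [log_inv, inv_rpow hz.le, ← rpow_neg hz.le] at h
    linarith
  · linarith [log_le_rpow_div hz.le hδ]

lemma integrableOn_rpow_mul_exp_neg_mul {s b : ℝ} (hs : -1 < s) (hb : 0 < b) :
    IntegrableOn (fun z : ℝ => z ^ s * exp (-(b * z))) (Ioi 0) := by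
  simpa [rpow_one] using integrableOn_rpow_mul_exp_neg_mul_rpow hs one_pos hb

lemma integrableOn_abs_log_mul_rpow_mul_exp_neg_mul {s b : ℝ} (hs : -1 < s) (hb : 0 < b) :
    IntegrableOn (fun z : ℝ => |log z| * z ^ s * exp (-(b * z))) (Ioi 0) := by
  -- `δ = (s + 1) / 2` keeps both exponents `s ± δ` above `-1`.
  set δ := (s + 1) / 2 with hδ_def
  have hδ : 0 < δ := by linarith
  have hmajorant : IntegrableOn
      (fun z : ℝ => δ⁻¹ * (z ^ (s + δ) * exp (-(b * z)) + z ^ (s - δ) * exp (-(b * z))))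
      (Ioi 0) :=
    ((integrableOn_rpow_mul_exp_neg_mul (by linarith) hb).add
      (integrableOn_rpow_mul_exp_neg_mul (by linarith) hb)).const_mul _
  refine hmajorant.mono' (by fun_prop) ?_
  filter_upwards [ae_restrict_mem measurableSet_Ioi] with z (hz : 0 < z)
  rw [norm_of_nonneg (by positivity)]
  calc |log z| * z ^ s * exp (-(b * z))
      ≤ (z ^ δ + z ^ (-δ)) / δ * z ^ s * exp (-(b * z)) := by
        gcongr; exact abs_log_le_rpow_add_rpow_neg_div hz hδ
    _ = _ := by
        rw [sub_eq_add_neg, rpow_add hz, rpow_add hz]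
        field_simp

lemma integrableOn_log_mul_rpow_mul_exp_neg_mul {s b : ℝ} (hs : -1 < s) (hb : 0 < b) :
    IntegrableOn (fun z : ℝ => log z * z ^ s * exp (-(b * z))) (Ioi 0) := by
  refine (integrableOn_abs_log_mul_rpow_mul_exp_neg_mul hs hb).mono' (by fun_prop) ?_
  filter_upwards [ae_restrict_mem measurableSet_Ioi] with z (hz : 0 < z)
  rw [norm_mul, norm_mul, norm_of_nonneg (rpow_nonneg hz.le s), norm_of_nonneg (exp_nonneg _),
    norm_eq_abs]

/-- This is `Γ'(s)`; its value cancels out of `c*'`. -/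
noncomputable def logGammaIntegral (s : ℝ) : ℝ := ∫ z in Ioi 0, log z * z ^ (s - 1) * exp (-z)

lemma integral_log_mul_rpow_mul_exp_neg_mul {s b : ℝ} (hs : 0 < s) (hb : 0 < b) :
    ∫ z in Ioi 0, log z * z ^ (s - 1) * exp (-(b * z))
      = b ^ (-s) * (logGammaIntegral s - log b * Gamma s) := by
  have hsub := integral_comp_mul_left_Ioi
    (fun w : ℝ => log (w / b) * (w / b) ^ (s - 1) * exp (-w)) 0 hb
  simp only [mul_zero, mul_div_cancel_left₀ _ hb.ne'] at hsub
  have hLog : IntegrableOn (fun w : ℝ => log w * w ^ (s - 1) * exp (-w)) (Ioi 0) := by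
    simpa using integrableOn_log_mul_rpow_mul_exp_neg_mul (by linarith : -1 < s - 1) one_pos
  have hGamma : IntegrableOn (fun w : ℝ => w ^ (s - 1) * exp (-w)) (Ioi 0) := by
    simpa using integrableOn_rpow_mul_exp_neg_mul (by linarith : -1 < s - 1) one_pos
  have hsplit : ∀ w ∈ Ioi (0 : ℝ), log (w / b) * (w / b) ^ (s - 1) * exp (-w)
      = b ^ (-(s - 1)) * (log w * w ^ (s - 1) * exp (-w) - log b * (w ^ (s - 1) * exp (-w))) := by
    intro w (hw : 0 < w)
    rw [log_div hw.ne' hb.ne', div_rpow hw.le hb.le, rpow_neg hb.le]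
    ring
  have hGammaInt : ∫ w in Ioi (0 : ℝ), w ^ (s - 1) * exp (-w) = Gamma s := by
    simpa using integral_rpow_mul_exp_neg_mul_Ioi hs one_pos
  rw [hsub, setIntegral_congr_fun measurableSet_Ioi hsplit, integral_const_mul,
    integral_sub hLog (hGamma.const_mul _), integral_const_mul, hGammaInt, smul_eq_mul,
    ← logGammaIntegral, ← mul_assoc, ← rpow_neg_one, ← rpow_add hb]
  ring_nf

variable {α : ℝ}

lemma gammaPDFReal_one_of_nonneg {y : ℝ} (hy : 0 ≤ y) :
    gammaPDFReal α 1 y = y ^ (α - 1) * exp (-y) / Gamma α := by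
  rw [gammaPDFReal, if_pos hy, one_rpow, one_mul]
  ring

lemma gammaPDFReal_one_mul_le {x z : ℝ} (hα : 0 < α) (hx : 0 < x) (hz : 0 < z) :
    gammaPDFReal α 1 (x * z) ≤ x ^ (α - 1) * z ^ (α - 1) / Gamma α := by
  rw [gammaPDFReal_one_of_nonneg (by positivity), mul_rpow hx.le hz.le]
  refine div_le_div_of_nonneg_right (mul_le_of_le_one_right (by positivity) ?_)
    (Gamma_pos_of_pos hα).le
  exact exp_le_one_iff.mpr (neg_nonpos.mpr (by positivity))

lemma integrable_gammaPDFReal {r : ℝ} (hα : 0 < α) (hr : 0 < r) : Integrable (gammaPDFReal α r) := by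
  refine ⟨(stronglyMeasurable_gammaPDFReal α r).aestronglyMeasurable, ?_⟩
  rw [hasFiniteIntegral_iff_ofReal (ae_of_all _ (gammaPDFReal_nonneg hα hr))]
  simpa [gammaPDF] using (lintegral_gammaPDF_eq_one hα hr).trans_lt ENNReal.one_lt_top

lemma gammaCDF_eq_cdf (hα : 0 < α) : gammaCDF α = cdf (gammaMeasure α 1) :=
  funext fun x => (cdf_gammaMeasure_eq_integral hα one_pos x).symm

lemma measurable_gammaCDF (hα : 0 < α) : Measurable (gammaCDF α) := by
  rw [gammaCDF_eq_cdf hα]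
  exact (cdf _).mono.measurable

lemma gammaCDF_nonneg (hα : 0 < α) (x : ℝ) : 0 ≤ gammaCDF α x := by
  rw [gammaCDF_eq_cdf hα]
  exact cdf_nonneg _ x

lemma gammaCDF_le_one (hα : 0 < α) (x : ℝ) : gammaCDF α x ≤ 1 := by
  rw [gammaCDF_eq_cdf hα]
  exact cdf_le_one _ x

lemma hasDerivAt_gammaCDF (hα : 0 < α) {x : ℝ} (hx : 0 < x) :
    HasDerivAt (gammaCDF α) (gammaPDFReal α 1 x) x := by
  have hint := integrable_gammaPDFReal hα one_pos
  have hCDF : gammaCDF α = fun u => gammaCDF α 0 + ∫ t in (0 : ℝ)..u, gammaPDFReal α 1 t := by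
    ext u
    rw [← intervalIntegral.integral_Iic_sub_Iic hint.integrableOn hint.integrableOn, gammaCDF,
      gammaCDF]
    ring
  have hcont : ContinuousAt (gammaPDFReal α 1) x := by
    refine ContinuousAt.congr (f := fun y => y ^ (α - 1) * exp (-y) / Gamma α)
      (by fun_prop (disch := first | exact (Gamma_pos_of_pos hα).ne' | exact Or.inl hx.ne')) ?_
    filter_upwards [lt_mem_nhds hx] with y hy using (gammaPDFReal_one_of_nonneg hy.le).symm
  rw [hCDF]
  exact (intervalIntegral.integral_hasDerivAt_right hint.intervalIntegrable
    (stronglyMeasurable_gammaPDFReal α 1).stronglyMeasurableAtFilter hcont).const_add _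

lemma rpow_le_max_of_mem_Icc {a b x p : ℝ} (ha : 0 < a) (hx : x ∈ Icc a b) :
    x ^ p ≤ max (a ^ p) (b ^ p) := by
  rcases le_total 0 p with hp | hp
  · exact (rpow_le_rpow (ha.le.trans hx.1) hx.2 hp).trans (le_max_right _ _)
  · exact (rpow_le_rpow_of_nonpos ha hx.1 hp).trans (le_max_left _ _)

lemma gammaPDFReal_one_mul_mul_le {x z : ℝ} (hα : 0 < α) (hx : 0 < x) (hz : 0 < z) :
    gammaPDFReal α 1 (x * z) * z * gammaPDFReal α 1 z
      ≤ x ^ (α - 1) / Gamma α ^ 2 * (z ^ (2 * α - 1) * exp (-z)) := by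
  have hz2 : z ^ (2 * α - 1) = z ^ (α - 1) * z * z ^ (α - 1) := by
    rw [show 2 * α - 1 = (α - 1) + 1 + (α - 1) by ring, rpow_add hz, rpow_add hz, rpow_one]
  calc gammaPDFReal α 1 (x * z) * z * gammaPDFReal α 1 z
      ≤ x ^ (α - 1) * z ^ (α - 1) / Gamma α * z * gammaPDFReal α 1 z := by
        gcongr
        · exact gammaPDFReal_nonneg hα one_pos z
        · exact gammaPDFReal_one_mul_le hα hx hz
    _ = x ^ (α - 1) / Gamma α ^ 2 * (z ^ (2 * α - 1) * exp (-z)) := by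
        rw [gammaPDFReal_one_of_nonneg hz.le, hz2]
        ring

noncomputable def logCDFIntegral (α c : ℝ) : ℝ :=
  ∫ z in Ioi 0, log z * gammaCDF α (c * z) * gammaPDFReal α 1 z

lemma cstarW_eq_logCDFIntegral (α : ℝ) :
    cstarW α = fun μ => logCDFIntegral α μ⁻¹ + logCDFIntegral α μ := by
  ext μ
  simp only [cstarW, logCDFIntegral, div_eq_inv_mul]

lemma integrableOn_log_mul_gammaCDF_mul_gammaPDFReal (hα : 0 < α) (c : ℝ) :
    IntegrableOn (fun z => log z * gammaCDF α (c * z) * gammaPDFReal α 1 z) (Ioi 0) := by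
  have hmeas := measurable_gammaCDF hα
  refine ((integrableOn_abs_log_mul_rpow_mul_exp_neg_mul (s := α - 1) (by linarith)
    one_pos).const_mul (Gamma α)⁻¹).mono' (by fun_prop) ?_
  filter_upwards [ae_restrict_mem measurableSet_Ioi] with z (hz : 0 < z)
  rw [norm_mul, norm_mul, norm_eq_abs, norm_of_nonneg (gammaCDF_nonneg hα _),
    norm_of_nonneg (gammaPDFReal_nonneg hα one_pos z)]
  calc |log z| * gammaCDF α (c * z) * gammaPDFReal α 1 z
      ≤ |log z| * 1 * gammaPDFReal α 1 z := by
        gcongr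
        · exact gammaPDFReal_nonneg hα one_pos z
        · exact gammaCDF_le_one hα _
    _ = _ := by
        rw [gammaPDFReal_one_of_nonneg hz.le, one_mul]
        ring

lemma hasDerivAt_logCDFIntegral_integral (hα : 0 < α) {c : ℝ} (hc : 0 < c) :
    HasDerivAt (logCDFIntegral α)
      (∫ z in Ioi 0, log z * (gammaPDFReal α 1 (c * z) * z) * gammaPDFReal α 1 z) c := by
  have hmeas := measurable_gammaCDF hα
  set K := max ((c / 2) ^ (α - 1)) ((3 * c / 2) ^ (α - 1))
  have hball : ∀ x ∈ Metric.ball c (c / 2), x ∈ Icc (c / 2) (3 * c / 2) := by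
    intro x hx
    rw [Metric.mem_ball, dist_eq, abs_lt] at hx
    constructor <;> linarith
  refine (hasDerivAt_integral_of_dominated_loc_of_deriv_le (μ := volume.restrict (Ioi 0))
    (F := fun x z => log z * gammaCDF α (x * z) * gammaPDFReal α 1 z)
    (F' := fun x z => log z * (gammaPDFReal α 1 (x * z) * z) * gammaPDFReal α 1 z)
    (bound := fun z => K / Gamma α ^ 2 * (|log z| * z ^ (2 * α - 1) * exp (-(1 * z))))
    (Metric.ball_mem_nhds c (half_pos hc)) (.of_forall fun _ => by fun_prop)
    (integrableOn_log_mul_gammaCDF_mul_gammaPDFReal hα c) (by fun_prop) ?_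
    ((integrableOn_abs_log_mul_rpow_mul_exp_neg_mul (by linarith) one_pos).const_mul _) ?_).2
  · filter_upwards [ae_restrict_mem measurableSet_Ioi] with z (hz : 0 < z) x hx
    have hx0 : 0 < x := by linarith [(hball x hx).1]
    rw [norm_mul, norm_mul, norm_eq_abs,
      norm_of_nonneg (mul_nonneg (gammaPDFReal_nonneg hα one_pos _) hz.le),
      norm_of_nonneg (gammaPDFReal_nonneg hα one_pos z), one_mul]
    calc |log z| * (gammaPDFReal α 1 (x * z) * z) * gammaPDFReal α 1 z
        ≤ |log z| * (x ^ (α - 1) / Gamma α ^ 2 * (z ^ (2 * α - 1) * exp (-z))) := by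
          rw [mul_assoc]
          exact mul_le_mul_of_nonneg_left (gammaPDFReal_one_mul_mul_le hα hx0 hz) (abs_nonneg _)
      _ ≤ |log z| * (K / Gamma α ^ 2 * (z ^ (2 * α - 1) * exp (-z))) := by
          gcongr
          exact rpow_le_max_of_mem_Icc (half_pos hc) (hball x hx)
      _ = K / Gamma α ^ 2 * (|log z| * z ^ (2 * α - 1) * exp (-z)) := by ring
  · filter_upwards [ae_restrict_mem measurableSet_Ioi] with z (hz : 0 < z) x hx
    have hx0 : 0 < x := by linarith [(hball x hx).1]
    have hCDF := (hasDerivAt_gammaCDF hα (mul_pos hx0 hz)).comp x (hasDerivAt_mul_const z)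
    simpa using (hCDF.const_mul (log z)).mul_const (gammaPDFReal α 1 z)

noncomputable def logCDFIntegralDeriv (α c : ℝ) : ℝ :=
  c ^ (α - 1) / Gamma α ^ 2 *
    ((1 + c) ^ (-(2 * α)) * (logGammaIntegral (2 * α) - log (1 + c) * Gamma (2 * α)))

lemma integral_log_mul_gammaPDFReal_mul_mul_gammaPDFReal (hα : 0 < α) {c : ℝ} (hc : 0 < c) :
    ∫ z in Ioi 0, log z * (gammaPDFReal α 1 (c * z) * z) * gammaPDFReal α 1 z
      = logCDFIntegralDeriv α c := by
  have hpointwise : ∀ z ∈ Ioi (0 : ℝ),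
      log z * (gammaPDFReal α 1 (c * z) * z) * gammaPDFReal α 1 z
        = c ^ (α - 1) / Gamma α ^ 2 * (log z * z ^ (2 * α - 1) * exp (-((1 + c) * z))) := by
    intro z (hz : 0 < z)
    rw [gammaPDFReal_one_of_nonneg (by positivity), gammaPDFReal_one_of_nonneg hz.le,
      mul_rpow hc.le hz.le, show 2 * α - 1 = (α - 1) + 1 + (α - 1) by ring, rpow_add hz,
      rpow_add hz, rpow_one, show -((1 + c) * z) = -(c * z) + -z by ring, exp_add]
    ring
  rw [logCDFIntegralDeriv, setIntegral_congr_fun measurableSet_Ioi hpointwise, integral_const_mul,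
    integral_log_mul_rpow_mul_exp_neg_mul (by positivity) (by positivity)]

lemma hasDerivAt_logCDFIntegral (hα : 0 < α) {c : ℝ} (hc : 0 < c) :
    HasDerivAt (logCDFIntegral α) (logCDFIntegralDeriv α c) c :=
  integral_log_mul_gammaPDFReal_mul_mul_gammaPDFReal hα hc ▸
    hasDerivAt_logCDFIntegral_integral hα hc

lemma logCDFIntegralDeriv_inv_mul_add {μ : ℝ} (hα : 0 < α) (hμ : 0 < μ) :
    logCDFIntegralDeriv α μ⁻¹ * -(μ ^ 2)⁻¹ + logCDFIntegralDeriv α μ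
      = -(Gamma (2 * α) * μ ^ (α - 1) * log μ) / (Gamma α ^ 2 * (1 + μ) ^ (2 * α)) := by
  have hμ1 : 0 < 1 + μ := by linarith
  have h2α : μ ^ (2 * α) = μ ^ (α - 1) * μ ^ (α - 1) * μ ^ 2 := by
    rw [← rpow_add hμ, ← rpow_natCast, ← rpow_add hμ]
    congr 1
    push_cast
    ring
  have hinv : 1 + μ⁻¹ = (1 + μ) / μ := by field_simp; ring
  simp only [logCDFIntegralDeriv]
  rw [inv_rpow hμ.le, hinv, div_rpow hμ1.le hμ.le, log_div hμ1.ne' hμ.ne', rpow_neg hμ1.le,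
    rpow_neg hμ.le, h2α]
  have hΓ := (Gamma_pos_of_pos hα).ne'
  have hμα := (rpow_pos_of_pos hμ (α - 1)).ne'
  have hμ1α := (rpow_pos_of_pos hμ1 (2 * α)).ne'
  field_simp
  ring

theorem cstarW_deriv (α : ℝ) (hα : 0 < α) :
    (∀ μ : ℝ, 1 ≤ μ →
      HasDerivAt (cstarW α)
        (-(Real.Gamma (2 * α) * μ ^ (α - 1) * Real.log μ)
          / (Real.Gamma α ^ 2 * (1 + μ) ^ (2 * α))) μ ∧
      -(Real.Gamma (2 * α) * μ ^ (α - 1) * Real.log μ)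
          / (Real.Gamma α ^ 2 * (1 + μ) ^ (2 * α)) ≤ 0) ∧
    AntitoneOn (cstarW α) (Set.Ici 1) := by
  have hderiv : ∀ μ : ℝ, 1 ≤ μ → HasDerivAt (cstarW α)
      (-(Gamma (2 * α) * μ ^ (α - 1) * log μ) / (Gamma α ^ 2 * (1 + μ) ^ (2 * α))) μ := by
    intro μ hμ
    have hμ0 : 0 < μ := by linarith
    rw [cstarW_eq_logCDFIntegral, ← logCDFIntegralDeriv_inv_mul_add hα hμ0]
    exact ((hasDerivAt_logCDFIntegral hα (inv_pos.mpr hμ0)).comp μ (hasDerivAt_inv hμ0.ne')).add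
      (hasDerivAt_logCDFIntegral hα hμ0)
  have hsign : ∀ μ : ℝ, 1 ≤ μ →
      -(Gamma (2 * α) * μ ^ (α - 1) * log μ) / (Gamma α ^ 2 * (1 + μ) ^ (2 * α)) ≤ 0 := by
    intro μ hμ
    have hlog := log_nonneg hμ
    have hμ1 : 0 < 1 + μ := by linarith
    exact div_nonpos_of_nonpos_of_nonneg (neg_nonpos.mpr (by positivity)) (by positivity)
  refine ⟨fun μ hμ => ⟨hderiv μ hμ, hsign μ hμ⟩, ?_⟩
  refine antitoneOn_of_hasDerivWithinAt_nonpos (convex_Ici 1)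
    (f' := fun μ => -(Gamma (2 * α) * μ ^ (α - 1) * log μ) / (Gamma α ^ 2 * (1 + μ) ^ (2 * α)))
    (fun μ hμ => (hderiv μ hμ).continuousAt.continuousWithinAt) ?_ ?_ <;>
    rw [interior_Ici] <;> intro μ (hμ : 1 < μ)
  · exact (hderiv μ hμ.le).hasDerivWithinAt
  · exact hsign μ hμ.le
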